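/- arXiv:2605.13434 — 3 statements merged into one kernel-verified Lean document; each statement's English description precedes it below -/
import Mathlib

section
/- Accumulated second-moment bound: Define Q_M := Σ_{m=0}^{M−1} Σ_{k=0}^{K−1} γ_{i_k}² E[‖g_k^m‖²]. Under (UG), (BV), L-smoothness of F, and bounded heterogeneity, if γ_max ≤ 1/(2 K L ρ), then Q_M ≤ 2 A M (σ² + ζ²) + 4 A ρ² Σ_{m=0}^{M−1} E[‖∇F(x^m)‖²]. -/
open MeasureTheory Finset

/-!
Each delivered gradient splits orthogonally into its conditional mean `∇F_i(y)` and the noise,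
so `E‖g‖² ≤ σ² + ζ² + ρ² E‖∇F(y)‖²`. The stale point `y` and the cycle start `x^m` are both server
iterates at most `K` updates old, so smoothness and Cauchy–Schwarz give
`E‖∇F(y)‖² ≤ 2 E‖∇F(x^m)‖² + 2 L² K ∑ γ² E‖g‖²`, summed over the last `K` iterations. The stepsize
condition caps the weight of that window sum at `1 / (2K)`, and every iteration lies in at most `K`
windows, so summing over all iterations gives
`Q_M ≤ A M (σ² + ζ²) + 2 A ρ² ∑ₘ E‖∇F(x^m)‖² + Q_M / 2`.
-/

theorem sum_range_mul_eq_sum_sum {β : Type*} [AddCommMonoid β] (f : ℕ → β) (M K : ℕ) :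
    ∑ t ∈ range (M * K), f t = ∑ m ∈ range M, ∑ k ∈ range K, f (m * K + k) := by
  induction M with
  | zero => simp
  | succ M ih => rw [sum_range_succ, ← ih, Nat.succ_mul, sum_range_add]

namespace Function.Periodic

variable {α : Type*} {ι : ℕ → α} {K : ℕ}

theorem apply_mul_add (hι : Periodic ι K) (m k : ℕ) : ι (m * K + k) = ι k := by
  simpa [add_comm] using hι.nat_mul m k

theorem sum_range_mul {β : Type*} [AddCommMonoid β] (hι : Periodic ι K) (f : α → ℕ → β)
    (M : ℕ) :
    ∑ t ∈ range (M * K), f (ι t) t = ∑ m ∈ range M, ∑ k ∈ range K, f (ι k) (m * K + k) := by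
  simp only [sum_range_mul_eq_sum_sum, hι.apply_mul_add]

theorem sum_range_mul_mul_div {R : Type*} [NonUnitalNonAssocSemiring R] (hι : Periodic ι K)
    (w : α → R) (D : ℕ → R) (M : ℕ) :
    ∑ t ∈ range (M * K), w (ι t) * D (t / K) = (∑ k ∈ range K, w (ι k)) * ∑ m ∈ range M, D m := by
  rw [hι.sum_range_mul (fun i t => w i * D (t / K)), sum_mul_sum, sum_comm (s := range K)]
  refine sum_congr rfl fun m _ => sum_congr rfl fun k hk => ?_
  have hk : k < K := mem_range.1 hk
  rw [add_comm, Nat.add_mul_div_right _ _ (by omega), Nat.div_eq_of_lt hk, zero_add]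

end Function.Periodic

theorem sum_range_sum_Ico_sub_le {c : ℕ → ℝ} (hc : ∀ u, 0 ≤ c u) (N K : ℕ) :
    ∑ t ∈ range N, ∑ u ∈ Ico (t - K) t, c u ≤ K * ∑ u ∈ range N, c u := by
  rw [sum_comm' (t' := range N) (s' := fun u => (Ioc u (u + K)).filter (· < N)), mul_sum]
  · refine sum_le_sum fun u _ => ?_
    rw [sum_const, nsmul_eq_mul]
    refine mul_le_mul_of_nonneg_right ?_ (hc u)
    exact_mod_cast (card_filter_le _ _).trans (by simp)
  · intro t u
    simp only [mem_range, mem_Ico, mem_filter, mem_Ioc]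
    omega

theorem sum_le_two_mul_of_le_add_sum_Ico {c a : ℕ → ℝ} (hc : ∀ u, 0 ≤ c u) {N K : ℕ}
    (h : ∀ t < N, c t ≤ a t + (2 * K : ℝ)⁻¹ * ∑ u ∈ Ico (t - K) t, c u) :
    ∑ t ∈ range N, c t ≤ 2 * ∑ t ∈ range N, a t := by
  set S := ∑ t ∈ range N, c t
  have hS : 0 ≤ S := sum_nonneg fun t _ => hc t
  have hsum : S ≤ ∑ t ∈ range N, a t + (2 * K : ℝ)⁻¹ * (K * S) := by
    calc S ≤ ∑ t ∈ range N, (a t + (2 * K : ℝ)⁻¹ * ∑ u ∈ Ico (t - K) t, c u) :=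
          sum_le_sum fun t ht => h t (mem_range.1 ht)
      _ ≤ _ := by
          rw [sum_add_distrib, ← mul_sum]
          gcongr
          exact sum_range_sum_Ico_sub_le hc N K
  have hhalf : (2 * K : ℝ)⁻¹ * (K * S) ≤ S / 2 := by
    rcases K.eq_zero_or_pos with rfl | hK
    · simp; positivity
    · exact le_of_eq (by field_simp)
  linarith

theorem exists_stale_iterate {α β : Type*} {ι : ℕ → α} {K : ℕ} (hK : 0 < K)
    (hι : Function.Periodic ι K) {y z : ℕ → β}
    (hy0 : ∀ t, (∀ s < t, ι s ≠ ι t) → y t = z 0)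
    (hyprev : ∀ s t, s < t → ι s = ι t → (∀ u, s < u → u < t → ι u ≠ ι t) → y t = z (s + 1))
    (t : ℕ) : ∃ p ≤ t, t ≤ p + K ∧ y t = z p := by
  classical
  -- by periodicity, worker `ι t` also delivered at `t - K`, so its previous delivery is that recent
  have hback : K ≤ t → t - K < t ∧ ι (t - K) = ι t := fun h =>
    ⟨by omega, by simpa [Nat.sub_add_cancel h] using (hι (t - K)).symm⟩
  by_cases hex : ∃ s < t, ι s = ι t
  · obtain ⟨s₀, hs₀⟩ := hex
    set P : ℕ → Prop := fun s => s < t ∧ ι s = ι t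
    set s := Nat.findGreatest P t
    have hs : P s := Nat.findGreatest_spec (P := P) hs₀.1.le hs₀
    refine ⟨s + 1, hs.1, ?_, hyprev s t hs.1 hs.2 fun u hsu hut hιu =>
      Nat.findGreatest_is_greatest hsu hut.le ⟨hut, hιu⟩⟩
    by_cases hKt : K ≤ t
    · have := Nat.le_findGreatest (P := P) (by omega : t - K ≤ t) (hback hKt)
      omega
    · omega
  · push Not at hex
    refine ⟨0, t.zero_le, ?_, hy0 t hex⟩
    by_contra h
    exact hex (t - K) (hback (by omega)).1 (hback (by omega)).2

theorem norm_sub_sq_le_mul_sum_Ico {E : Type*} [SeminormedAddCommGroup E] {z v : ℕ → E}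
    (hz : ∀ t, z (t + 1) = z t - v t) {K t p s : ℕ} (hp : p ≤ t) (hpK : t ≤ p + K)
    (hs : s ≤ t) (hsK : t ≤ s + K) :
    ‖z p - z s‖ ^ 2 ≤ K * ∑ u ∈ Ico (t - K) t, ‖v u‖ ^ 2 := by
  wlog hps : p ≤ s generalizing p s
  · rw [norm_sub_rev]
    exact this hs hsK hp hpK (by omega)
  have hdist : ‖z p - z s‖ ≤ ∑ u ∈ Ico p s, ‖v u‖ := by
    simpa [dist_eq_norm, hz, norm_sub_rev] using dist_le_Ico_sum_dist z hps
  have hcard : (#(Ico p s) : ℝ) ≤ K := by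
    rw [Nat.card_Ico]
    exact_mod_cast (by omega)
  have hsub : Ico p s ⊆ Ico (t - K) t := by
    intro u
    simp only [mem_Ico]
    omega
  calc ‖z p - z s‖ ^ 2 ≤ (∑ u ∈ Ico p s, ‖v u‖) ^ 2 := pow_le_pow_left₀ (norm_nonneg _) hdist 2
    _ ≤ #(Ico p s) * ∑ u ∈ Ico p s, ‖v u‖ ^ 2 := sq_sum_le_card_mul_sum_sq
    _ ≤ K * ∑ u ∈ Ico (t - K) t, ‖v u‖ ^ 2 :=
        mul_le_mul hcard (sum_le_sum_of_subset_of_nonneg hsub fun _ _ _ => sq_nonneg _)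
          (sum_nonneg fun _ _ => sq_nonneg _) K.cast_nonneg

theorem LipschitzWith.norm_sq_le_two_mul {E F : Type*} [SeminormedAddCommGroup E]
    [SeminormedAddCommGroup F] {G : E → F} {Λ : NNReal} (hG : LipschitzWith Λ G) (x y : E) :
    ‖G y‖ ^ 2 ≤ 2 * ‖G x‖ ^ 2 + 2 * Λ ^ 2 * ‖y - x‖ ^ 2 := by
  have h : ‖G y‖ ≤ ‖G x‖ + Λ * ‖y - x‖ := by
    linarith [norm_le_norm_add_norm_sub' (G y) (G x), hG.norm_sub_le y x]
  calc ‖G y‖ ^ 2 ≤ (‖G x‖ + Λ * ‖y - x‖) ^ 2 := pow_le_pow_left₀ (norm_nonneg _) h 2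
    _ ≤ 2 * (‖G x‖ ^ 2 + (Λ * ‖y - x‖) ^ 2) := add_sq_le
    _ = 2 * ‖G x‖ ^ 2 + 2 * Λ ^ 2 * ‖y - x‖ ^ 2 := by ring

theorem measurable_gradient {E : Type*} [NormedAddCommGroup E] [InnerProductSpace ℝ E]
    [CompleteSpace E] [MeasurableSpace E] [BorelSpace E] (f : E → ℝ) :
    Measurable (gradient f) :=
  (InnerProductSpace.toDual ℝ E).symm.continuous.measurable.comp (measurable_fderiv ℝ f)

section Integrability

variable {Ω E : Type*} {m0 : MeasurableSpace Ω} {μ : Measure Ω} [NormedAddCommGroup E]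

theorem MeasureTheory.MemLp.integrable_norm_sq {f : Ω → E} (hf : MemLp f 2 μ) :
    Integrable (fun ω => ‖f ω‖ ^ 2) μ :=
  (memLp_two_iff_integrable_sq_norm hf.1).1 hf

theorem LipschitzWith.memLp_comp [IsFiniteMeasure μ] {F : Type*} [NormedAddCommGroup F]
    {G : E → F} {Λ : NNReal} (hG : LipschitzWith Λ G) {p : ENNReal} {X : Ω → E}
    (hX : MemLp X p μ) : MemLp (fun ω => G (X ω)) p μ := by
  refine ((memLp_const ‖G 0‖).add (hX.norm.const_mul Λ)).of_le
    (hG.continuous.comp_aestronglyMeasurable hX.1) (ae_of_all _ fun ω => ?_)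
  have := hG.norm_sub_le (X ω) 0
  simp only [sub_zero, Pi.add_apply, Real.norm_eq_abs] at this ⊢
  refine le_trans ?_ (le_abs_self _)
  linarith [norm_le_norm_add_norm_sub' (G (X ω)) (G 0)]

theorem MeasureTheory.MemLp.of_norm_sq_le_add_mul [IsFiniteMeasure μ] {F : Type*}
    [NormedAddCommGroup F] {u : Ω → E} {v : Ω → F} {a b : ℝ} (hu : AEStronglyMeasurable u μ)
    (hv : MemLp v 2 μ) (huv : ∀ ω, ‖u ω‖ ^ 2 ≤ a + b * ‖v ω‖ ^ 2) : MemLp u 2 μ := by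
  refine (memLp_two_iff_integrable_sq_norm hu).2 <|
    ((integrable_const a).add (hv.integrable_norm_sq.const_mul b)).mono'
      (hu.norm.pow 2) (ae_of_all _ fun ω => ?_)
  simpa using huv ω

theorem memLp_iterate [IsFiniteMeasure μ] [NormedSpace ℝ E] {p : ENNReal} {η : ℕ → ℝ}
    {g z : ℕ → Ω → E} {x0 : E} (hz0 : ∀ ω, z 0 ω = x0)
    (hz : ∀ t ω, z (t + 1) ω = z t ω - η t • g t ω) (hg : ∀ t, MemLp (g t) p μ) (t : ℕ) :
    MemLp (z t) p μ := by
  induction t with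
  | zero => simpa only [funext hz0] using memLp_const x0
  | succ t ih =>
    rw [show z (t + 1) = z t - η t • g t from funext (hz t)]
    exact ih.sub ((hg t).const_smul (η t))

theorem LipschitzWith.integral_norm_sq_comp_iterate_le [IsFiniteMeasure μ] [NormedSpace ℝ E]
    {η : ℕ → ℝ} {g z : ℕ → Ω → E} (hz : ∀ t ω, z (t + 1) ω = z t ω - η t • g t ω)
    (hz2 : ∀ t, MemLp (z t) 2 μ) (hg2 : ∀ t, MemLp (g t) 2 μ) {G : E → E} {Λ : NNReal}
    (hG : LipschitzWith Λ G) {K t p s : ℕ} (hp : p ≤ t) (hpK : t ≤ p + K) (hs : s ≤ t)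
    (hsK : t ≤ s + K) :
    ∫ ω, ‖G (z p ω)‖ ^ 2 ∂μ ≤ 2 * ∫ ω, ‖G (z s ω)‖ ^ 2 ∂μ
      + 2 * Λ ^ 2 * (K * ∑ u ∈ Ico (t - K) t, η u ^ 2 * ∫ ω, ‖g u ω‖ ^ 2 ∂μ) := by
  have hpt : ∀ ω, ‖G (z p ω)‖ ^ 2
      ≤ 2 * ‖G (z s ω)‖ ^ 2 + 2 * Λ ^ 2 * (K * ∑ u ∈ Ico (t - K) t, η u ^ 2 * ‖g u ω‖ ^ 2) := by
    intro ω
    have hdrift := norm_sub_sq_le_mul_sum_Ico (z := fun t => z t ω) (v := fun t => η t • g t ω)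
      (fun t => hz t ω) hp hpK hs hsK
    simp only [norm_smul, mul_pow, Real.norm_eq_abs, sq_abs] at hdrift
    linarith [hG.norm_sq_le_two_mul (z s ω) (z p ω),
      mul_le_mul_of_nonneg_left hdrift (by positivity : (0 : ℝ) ≤ 2 * Λ ^ 2)]
  have hGX := (hG.memLp_comp (hz2 s)).integrable_norm_sq
  have hwindow : Integrable (fun ω => ∑ u ∈ Ico (t - K) t, η u ^ 2 * ‖g u ω‖ ^ 2) μ :=
    integrable_finsetSum _ fun u _ => (hg2 u).integrable_norm_sq.const_mul _
  calc ∫ ω, ‖G (z p ω)‖ ^ 2 ∂μ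
      ≤ ∫ ω, (2 * ‖G (z s ω)‖ ^ 2
          + 2 * Λ ^ 2 * (K * ∑ u ∈ Ico (t - K) t, η u ^ 2 * ‖g u ω‖ ^ 2)) ∂μ :=
        integral_mono (hG.memLp_comp (hz2 p)).integrable_norm_sq
          ((hGX.const_mul 2).add ((hwindow.const_mul _).const_mul _)) hpt
    _ = _ := by
        rw [integral_add (hGX.const_mul 2) ((hwindow.const_mul _).const_mul _),
          integral_const_mul, integral_const_mul, integral_const_mul,
          integral_finsetSum _ fun u _ => (hg2 u).integrable_norm_sq.const_mul _]
        simp only [integral_const_mul]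

end Integrability

theorem integral_le_add_mul_integral {Ω : Type*} {m0 : MeasurableSpace Ω} {μ : Measure Ω}
    [IsProbabilityMeasure μ] {f h : Ω → ℝ} {a b : ℝ} (hf : Integrable f μ) (hh : Integrable h μ)
    (hfh : ∀ ω, f ω ≤ a + b * h ω) :
    ∫ ω, f ω ∂μ ≤ a + b * ∫ ω, h ω ∂μ := by
  calc ∫ ω, f ω ∂μ ≤ ∫ ω, (a + b * h ω) ∂μ :=
        integral_mono hf ((integrable_const a).add (hh.const_mul b)) hfh
    _ = a + b * ∫ ω, h ω ∂μ := by
        rw [integral_add (integrable_const a) (hh.const_mul b), integral_const_mul]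
        simp

theorem integral_le_of_condExp_le_const {Ω : Type*} {m m0 : MeasurableSpace Ω} {μ : Measure Ω}
    [IsProbabilityMeasure μ] (hm : m ≤ m0) {f : Ω → ℝ} {c : ℝ}
    (hf : μ[f | m] ≤ᵐ[μ] fun _ => c) : ∫ ω, f ω ∂μ ≤ c := by
  rw [← integral_condExp hm]
  simpa using integral_mono_ae integrable_condExp (integrable_const c) hf

section ConditionalMean

variable {Ω E : Type*} {m m0 : MeasurableSpace Ω} {μ : Measure Ω}
  [NormedAddCommGroup E] [InnerProductSpace ℝ E] [CompleteSpace E]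

theorem integral_norm_sq_eq_add_of_condExp_ae_eq [IsFiniteMeasure μ] (hm : m ≤ m0)
    {g h : Ω → E} (hg : MemLp g 2 μ) (hh : MemLp h 2 μ) (hhm : StronglyMeasurable[m] h)
    (hgh : μ[g | m] =ᵐ[μ] h) :
    ∫ ω, ‖g ω‖ ^ 2 ∂μ = ∫ ω, ‖g ω - h ω‖ ^ 2 ∂μ + ∫ ω, ‖h ω‖ ^ 2 ∂μ := by
  have hpt : ∀ ω, ‖g ω‖ ^ 2 = ‖g ω - h ω‖ ^ 2 + ‖h ω‖ ^ 2 + 2 * inner ℝ (h ω) (g ω - h ω) := by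
    intro ω
    have := norm_add_sq_real (g ω - h ω) (h ω)
    rw [sub_add_cancel, real_inner_comm] at this
    linarith
  have hg_int := hg.integrable_norm_sq
  have hgh_int : Integrable (fun ω => ‖g ω - h ω‖ ^ 2) μ := (hg.sub hh).integrable_norm_sq
  have hh_int := hh.integrable_norm_sq
  have hcross_int : Integrable (fun ω => inner ℝ (h ω) (g ω - h ω)) μ := by
    refine ((hg_int.sub (hgh_int.add hh_int)).div_const 2).congr (ae_of_all _ fun ω => ?_)
    simp only [Pi.sub_apply, Pi.add_apply, hpt ω]
    ring
  -- pull-out property: `μ[⟪h, g - h⟫ | m] = ⟪h, μ[g - h | m]⟫ = 0`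
  have hcross : ∫ ω, inner ℝ (h ω) (g ω - h ω) ∂μ = 0 := by
    have hsub : μ[g - h | m] =ᵐ[μ] 0 := by
      filter_upwards [condExp_sub (hg.integrable one_le_two) (hh.integrable one_le_two) m, hgh]
        with ω h1 h2
      rw [h1, Pi.sub_apply, h2, condExp_of_stronglyMeasurable hm hhm (hh.integrable one_le_two)]
      simp
    calc ∫ ω, inner ℝ (h ω) (g ω - h ω) ∂μ
        = ∫ ω, (μ[fun ω => innerSL ℝ (h ω) ((g - h) ω) | m]) ω ∂μ := (integral_condExp hm).symm
      _ = ∫ ω, innerSL ℝ (h ω) ((μ[g - h | m]) ω) ∂μ :=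
          integral_congr_ae (condExp_bilin_of_stronglyMeasurable_left (innerSL ℝ) hhm
            hcross_int ((hg.sub hh).integrable one_le_two))
      _ = 0 := by
          rw [integral_congr_ae (hsub.mono fun ω hω => by rw [hω])]
          simp
  have hsum_int : Integrable (fun ω => ‖g ω - h ω‖ ^ 2 + ‖h ω‖ ^ 2) μ := hgh_int.add hh_int
  rw [integral_congr_ae (ae_of_all _ hpt), integral_add hsum_int (hcross_int.const_mul 2),
    integral_add hgh_int hh_int, integral_const_mul, hcross, mul_zero, add_zero]

theorem integral_norm_sq_le_of_condExp_ae_eq [IsProbabilityMeasure μ] (hm : m ≤ m0)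
    {g h : Ω → E} {σ : ℝ} (hg : MemLp g 2 μ) (hh : MemLp h 2 μ) (hhm : StronglyMeasurable[m] h)
    (hgh : μ[g | m] =ᵐ[μ] h) (hvar : μ[fun ω => ‖g ω - h ω‖ ^ 2 | m] ≤ᵐ[μ] fun _ => σ ^ 2) :
    ∫ ω, ‖g ω‖ ^ 2 ∂μ ≤ σ ^ 2 + ∫ ω, ‖h ω‖ ^ 2 ∂μ := by
  rw [integral_norm_sq_eq_add_of_condExp_ae_eq hm hg hh hhm hgh]
  linarith [integral_le_of_condExp_le_const hm hvar]

theorem sq_mul_integral_norm_sq_le [IsProbabilityMeasure μ] (hm : m ≤ m0)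
    {η : ℕ → ℝ} {g z : ℕ → Ω → E} (hz : ∀ t ω, z (t + 1) ω = z t ω - η t • g t ω)
    (hz2 : ∀ t, MemLp (z t) 2 μ) (hg2 : ∀ t, MemLp (g t) 2 μ)
    {Gi G : E → E} {Λ : NNReal} (hG : LipschitzWith Λ G) {σ ζ ρ : ℝ} (hρ : 0 ≤ ρ)
    (hhet : ∀ x, ‖Gi x‖ ^ 2 ≤ ζ ^ 2 + ρ ^ 2 * ‖G x‖ ^ 2)
    {K t p s : ℕ} (hp : p ≤ t) (hpK : t ≤ p + K) (hs : s ≤ t) (hsK : t ≤ s + K)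
    (hGim : StronglyMeasurable[m] fun ω => Gi (z p ω))
    (hUG : μ[g t | m] =ᵐ[μ] fun ω => Gi (z p ω))
    (hBV : μ[fun ω => ‖g t ω - Gi (z p ω)‖ ^ 2 | m] ≤ᵐ[μ] fun _ => σ ^ 2)
    (hη : 0 ≤ η t) (hstep : 2 * K * Λ * ρ * η t ≤ 1) :
    η t ^ 2 * ∫ ω, ‖g t ω‖ ^ 2 ∂μ
      ≤ η t ^ 2 * (σ ^ 2 + ζ ^ 2 + 2 * ρ ^ 2 * ∫ ω, ‖G (z s ω)‖ ^ 2 ∂μ)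
        + (2 * K : ℝ)⁻¹ * ∑ u ∈ Ico (t - K) t, η u ^ 2 * ∫ ω, ‖g u ω‖ ^ 2 ∂μ := by
  set S := ∑ u ∈ Ico (t - K) t, η u ^ 2 * ∫ ω, ‖g u ω‖ ^ 2 ∂μ
  have hGY := hG.memLp_comp (hz2 p)
  have hGiY : MemLp (fun ω => Gi (z p ω)) 2 μ :=
    MemLp.of_norm_sq_le_add_mul (hGim.mono hm).aestronglyMeasurable hGY fun ω => hhet _
  have hnoise := integral_norm_sq_le_of_condExp_ae_eq hm (hg2 t) hGiY hGim hUG hBV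
  have hhet_int : ∫ ω, ‖Gi (z p ω)‖ ^ 2 ∂μ ≤ ζ ^ 2 + ρ ^ 2 * ∫ ω, ‖G (z p ω)‖ ^ 2 ∂μ :=
    integral_le_add_mul_integral hGiY.integrable_norm_sq hGY.integrable_norm_sq fun ω => hhet _
  have hsmooth := hG.integral_norm_sq_comp_iterate_le hz hz2 hg2 hp hpK hs hsK
  have hcoef : 2 * ρ ^ 2 * Λ ^ 2 * K * η t ^ 2 ≤ (2 * K : ℝ)⁻¹ := by
    have hid : 2 * ρ ^ 2 * Λ ^ 2 * K * η t ^ 2 = (2 * K * Λ * ρ * η t) ^ 2 * (2 * K : ℝ)⁻¹ := by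
      rcases K.eq_zero_or_pos with rfl | hK
      · simp
      · field_simp
    rw [hid]
    exact mul_le_of_le_one_left (by positivity) (pow_le_one₀ (by positivity) hstep)
  have hS : 0 ≤ S :=
    sum_nonneg fun u _ => mul_nonneg (sq_nonneg _) (integral_nonneg fun ω => sq_nonneg _)
  have hmoment : ∫ ω, ‖g t ω‖ ^ 2 ∂μ
      ≤ σ ^ 2 + ζ ^ 2 + 2 * ρ ^ 2 * ∫ ω, ‖G (z s ω)‖ ^ 2 ∂μ + 2 * ρ ^ 2 * Λ ^ 2 * K * S := by
    linarith [mul_le_mul_of_nonneg_left hsmooth (sq_nonneg ρ)]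
  calc η t ^ 2 * ∫ ω, ‖g t ω‖ ^ 2 ∂μ
      ≤ η t ^ 2 * (σ ^ 2 + ζ ^ 2 + 2 * ρ ^ 2 * ∫ ω, ‖G (z s ω)‖ ^ 2 ∂μ
          + 2 * ρ ^ 2 * Λ ^ 2 * K * S) := mul_le_mul_of_nonneg_left hmoment (sq_nonneg _)
    _ = η t ^ 2 * (σ ^ 2 + ζ ^ 2 + 2 * ρ ^ 2 * ∫ ω, ‖G (z s ω)‖ ^ 2 ∂μ)
          + 2 * ρ ^ 2 * Λ ^ 2 * K * η t ^ 2 * S := by ring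
    _ ≤ _ := by gcongr

end ConditionalMean

theorem accumulated_second_moment_bound_general
    {d n : ℕ}
    {Ω : Type} {m0 : MeasurableSpace Ω} (μ : Measure Ω) [IsProbabilityMeasure μ]
    (Floc : Fin n → EuclideanSpace ℝ (Fin d) → ℝ)
    (F : EuclideanSpace ℝ (Fin d) → ℝ)
    (K : ℕ)
    (ι : ℕ → Fin n) (hιper : ∀ t, ι (t + K) = ι t)
    (γ : Fin n → ℝ) (hγpos : ∀ i, 0 < γ i)
    (ℱ : ℕ → MeasurableSpace Ω) (hℱle : ∀ t, ℱ t ≤ m0)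
    (g y z : ℕ → Ω → EuclideanSpace ℝ (Fin d))
    (x0 : EuclideanSpace ℝ (Fin d)) (hz0 : ∀ ω, z 0 ω = x0)
    (hzrec : ∀ t ω, z (t + 1) ω = z t ω - γ (ι t) • g t ω)
    (hy0 : ∀ t, (∀ s < t, ι s ≠ ι t) → y t = z 0)
    (hyprev : ∀ s t, s < t → ι s = ι t → (∀ u, s < u → u < t → ι u ≠ ι t) →
        y t = z (s + 1))
    (hg2 : ∀ t, MemLp (g t) 2 μ)
    (hymeas : ∀ t, StronglyMeasurable[ℱ t] (y t))
    (σ : ℝ)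
    (hUG : ∀ t, μ[g t | ℱ t] =ᵐ[μ] fun ω => gradient (Floc (ι t)) (y t ω))
    (hBV : ∀ t, μ[(fun ω => ‖g t ω - gradient (Floc (ι t)) (y t ω)‖ ^ 2) | ℱ t]
        ≤ᵐ[μ] fun _ => σ ^ 2)
    (L : ℝ)
    (hL : ∀ x x', ‖gradient F x - gradient F x'‖ ≤ L * ‖x - x'‖)
    (ζ ρ : ℝ) (hρ : 0 ≤ ρ)
    (hhet : ∀ i x, ‖gradient (Floc i) x‖ ^ 2 ≤ ζ ^ 2 + ρ ^ 2 * ‖gradient F x‖ ^ 2)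
    (hγmax : ∀ i, 2 * (K : ℝ) * L * ρ * γ i ≤ 1)
    (M : ℕ) :
    ∑ m ∈ Finset.range M, ∑ k ∈ Finset.range K,
        γ (ι k) ^ 2 * ∫ ω, ‖g (m * K + k) ω‖ ^ 2 ∂μ
      ≤ 2 * (∑ k ∈ Finset.range K, γ (ι k) ^ 2) * M * (σ ^ 2 + ζ ^ 2)
        + 4 * (∑ k ∈ Finset.range K, γ (ι k) ^ 2) * ρ ^ 2 *
            ∑ m ∈ Finset.range M, ∫ ω, ‖gradient F (z (m * K) ω)‖ ^ 2 ∂μ := by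
  rcases K.eq_zero_or_pos with rfl | hK
  · simp
  -- `max L 0` satisfies both the Lipschitz bound and the stepsize condition, even if `L < 0`
  have hG : LipschitzWith L.toNNReal (gradient F) := LipschitzWith.of_dist_le_mul fun x x' => by
    simpa only [dist_eq_norm] using (hL x x').trans (by gcongr; exact Real.le_coe_toNNReal L)
  have hstep : ∀ i, 2 * (K : ℝ) * L.toNNReal * ρ * γ i ≤ 1 := fun i => by
    rcases le_total L 0 with h | h
    · simp [Real.toNNReal_of_nonpos h]
    · simpa [Real.coe_toNNReal _ h] using hγmax i
  have hper : Function.Periodic ι K := hιper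
  have hz2 := memLp_iterate hz0 hzrec hg2
  have hiter : ∀ t, γ (ι t) ^ 2 * ∫ ω, ‖g t ω‖ ^ 2 ∂μ
      ≤ γ (ι t) ^ 2 * (σ ^ 2 + ζ ^ 2 + 2 * ρ ^ 2 * ∫ ω, ‖gradient F (z (t / K * K) ω)‖ ^ 2 ∂μ)
        + (2 * K : ℝ)⁻¹ * ∑ u ∈ Ico (t - K) t, γ (ι u) ^ 2 * ∫ ω, ‖g u ω‖ ^ 2 ∂μ := by
    intro t
    obtain ⟨p, hpt, htp, hyz⟩ := exists_stale_iterate hK hper hy0 hyprev t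
    exact sq_mul_integral_norm_sq_le (hℱle t) hzrec hz2 hg2 hG hρ (hhet (ι t)) hpt htp
      (Nat.div_mul_le_self t K) (Nat.lt_div_mul_add hK).le
      (hyz ▸ ((measurable_gradient _).comp (hymeas t).measurable).stronglyMeasurable)
      (hyz ▸ hUG t) (hyz ▸ hBV t) (hγpos _).le (hstep _)
  calc _ = ∑ t ∈ range (M * K), γ (ι t) ^ 2 * ∫ ω, ‖g t ω‖ ^ 2 ∂μ :=
        (hper.sum_range_mul (fun i t => γ i ^ 2 * ∫ ω, ‖g t ω‖ ^ 2 ∂μ) M).symm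
    _ ≤ 2 * ∑ t ∈ range (M * K), γ (ι t) ^ 2 *
          (σ ^ 2 + ζ ^ 2 + 2 * ρ ^ 2 * ∫ ω, ‖gradient F (z (t / K * K) ω)‖ ^ 2 ∂μ) :=
        sum_le_two_mul_of_le_add_sum_Ico (fun u => by positivity) fun t _ => hiter t
    _ = _ := by
        rw [hper.sum_range_mul_mul_div (γ · ^ 2)
          (fun m => σ ^ 2 + ζ ^ 2 + 2 * ρ ^ 2 * ∫ ω, ‖gradient F (z (m * K) ω)‖ ^ 2 ∂μ),
          sum_add_distrib, sum_const, card_range, nsmul_eq_mul, ← mul_sum]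
        ring

/-- **Accumulated second-moment bound.**
Asynchronous SGD with cyclic update schedule (flattened iteration index `t = m*K + k`):
`n` workers with computation times `τ i > 0` satisfying the harmonic-periods condition,
worker `i` delivering `Ki i = τmax / τ i` gradients per cycle of `K` inner iterations
following the (K-periodic) schedule `ι`; the server updates `z (t+1) = z t − γ (ι t) • g t`
from `z 0 = x⁰`; the stale model `y t` at which `g t` is computed is the server iterate seen
by worker `ι t` at its previous delivery (hence an earlier server iterate lying at most `K`
updates in the past), encoded by `hy0`/`hyprev`.  Under (UG), (BV), `L`-smoothness of
`F = (1/n) ∑ i, F i`, bounded heterogeneity, and `γmax ≤ 1/(2 K L ρ)`, the quantity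
`Q_M = ∑_{m<M} ∑_{k<K} γ_{i_k}² E[‖g_k^m‖²]` satisfies
`Q_M ≤ 2 A M (σ² + ζ²) + 4 A ρ² ∑_{m<M} E[‖∇F(x^m)‖²]`, where `A = ∑_{k<K} γ_{i_k}²`. -/
theorem accumulated_second_moment_bound
    {d n : ℕ} (hn : 0 < n)
    {Ω : Type} {m0 : MeasurableSpace Ω} (μ : Measure Ω) [IsProbabilityMeasure μ]
    (Floc : Fin n → EuclideanSpace ℝ (Fin d) → ℝ)
    (hdiff : ∀ i, Differentiable ℝ (Floc i))
    (F : EuclideanSpace ℝ (Fin d) → ℝ)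
    (hF : ∀ x, F x = (1 / (n : ℝ)) * ∑ i, Floc i x)
    (τ : Fin n → ℝ) (hτpos : ∀ i, 0 < τ i)
    (hharm : ∀ i j, (∃ q : ℕ, τ i = (q : ℝ) * τ j) ∨ (∃ q : ℕ, τ j = (q : ℝ) * τ i))
    (τmax : ℝ) (hτmax : IsGreatest (Set.range τ) τmax)
    (Ki : Fin n → ℕ) (hKi : ∀ i, (Ki i : ℝ) = τmax / τ i)
    (K : ℕ) (hK : K = ∑ i, Ki i)
    (ι : ℕ → Fin n) (hιper : ∀ t, ι (t + K) = ι t)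
    (hιcount : ∀ i, ((Finset.range K).filter fun k => ι k = i).card = Ki i)
    (γ : Fin n → ℝ) (hγpos : ∀ i, 0 < γ i)
    (ℱ : ℕ → MeasurableSpace Ω) (hℱmono : Monotone ℱ) (hℱle : ∀ t, ℱ t ≤ m0)
    (g y z : ℕ → Ω → EuclideanSpace ℝ (Fin d))
    (x0 : EuclideanSpace ℝ (Fin d)) (hz0 : ∀ ω, z 0 ω = x0)
    (hzrec : ∀ t ω, z (t + 1) ω = z t ω - γ (ι t) • g t ω)
    (hy0 : ∀ t, (∀ s < t, ι s ≠ ι t) → y t = z 0)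
    (hyprev : ∀ s t, s < t → ι s = ι t → (∀ u, s < u → u < t → ι u ≠ ι t) →
        y t = z (s + 1))
    (hg2 : ∀ t, MemLp (g t) 2 μ)
    (hgmeas : ∀ t, StronglyMeasurable[ℱ (t + 1)] (g t))
    (hymeas : ∀ t, StronglyMeasurable[ℱ t] (y t))
    (hzmeas : ∀ t, StronglyMeasurable[ℱ t] (z t))
    (σ : ℝ)
    (hUG : ∀ t, μ[g t | ℱ t] =ᵐ[μ] fun ω => gradient (Floc (ι t)) (y t ω))
    (hBV : ∀ t, μ[(fun ω => ‖g t ω - gradient (Floc (ι t)) (y t ω)‖ ^ 2) | ℱ t]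
        ≤ᵐ[μ] fun _ => σ ^ 2)
    (L : ℝ)
    (hL : ∀ x x', ‖gradient F x - gradient F x'‖ ≤ L * ‖x - x'‖)
    (ζ ρ : ℝ) (hζ : 0 ≤ ζ) (hρ : 0 ≤ ρ)
    (hhet : ∀ i x, ‖gradient (Floc i) x‖ ^ 2 ≤ ζ ^ 2 + ρ ^ 2 * ‖gradient F x‖ ^ 2)
    (hγmax : ∀ i, 2 * (K : ℝ) * L * ρ * γ i ≤ 1)
    (M : ℕ) :
    ∑ m ∈ Finset.range M, ∑ k ∈ Finset.range K,
        γ (ι k) ^ 2 * ∫ ω, ‖g (m * K + k) ω‖ ^ 2 ∂μ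
      ≤ 2 * (∑ k ∈ Finset.range K, γ (ι k) ^ 2) * M * (σ ^ 2 + ζ ^ 2)
        + 4 * (∑ k ∈ Finset.range K, γ (ι k) ^ 2) * ρ ^ 2 *
            ∑ m ∈ Finset.range M, ∫ ω, ‖gradient F (z (m * K) ω)‖ ^ 2 ∂μ :=
  accumulated_second_moment_bound_general μ Floc F K ι hιper γ hγpos ℱ hℱle g y z x0 hz0 hzrec hy0
    hyprev hg2 hymeas σ hUG hBV L hL ζ ρ hρ hhet hγmax M
end

section
/- Necessity of bounded heterogeneity (counterexample): Let c > 0, γ > 0, and x₀ ∈ ℝ. Define F₁(x) := x²/2 − cx, F₂(x) := x²/2 + cx, and the deterministic asynchronous cycle x₁ := x₀ − γ(x₀ − c), x₂ := x₁ − γ(x₁ − c), x³ := x₂ − 2γ(x₀ + c). Then x³ = x₀(1 − 4γ + γ²) − γ²c. Moreover, if c > (1 + |x₀(1 − 4γ + γ²)|)/γ², then |∇F(x³)| = |x³| > 1, where F := (F₁ + F₂)/2, so F(x) = x²/2. -/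
/-- **Necessity of bounded heterogeneity (counterexample).**
Two workers with local objectives `F₁(x) = x²/2 − cx`, `F₂(x) = x²/2 + cx` and computation
times `τ₁ = 1, τ₂ = 2`; the global objective is `F = (F₁ + F₂)/2`, so `F(x) = x²/2` and
`∇F(x) = x`.  Rescaled ASGD with exact (noiseless) gradients runs one cycle from `x₀`:
worker 1 applies two updates of stepsize `γ` with gradients `∇F₁` at the current iterate,
`x₁ = x₀ − γ(x₀ − c)` and `x₂ = x₁ − γ(x₁ − c)`, then worker 2 applies one update of
stepsize `2γ` with its stale gradient `∇F₂(x₀)`: `x₃ = x₂ − 2γ(x₀ + c)`.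
Then `x₃ = x₀(1 − 4γ + γ²) − γ²c`, and if `c > (1 + |x₀(1 − 4γ + γ²)|)/γ²` then the gradient
of `F` at the end of the cycle satisfies `|∇F(x₃)| = |x₃| > 1`. -/
theorem heterogeneity_counterexample
    (c γ x0 : ℝ) (hc : 0 < c) (hγ : 0 < γ)
    (F1 F2 F : ℝ → ℝ)
    (hF1 : ∀ x, F1 x = x ^ 2 / 2 - c * x)
    (hF2 : ∀ x, F2 x = x ^ 2 / 2 + c * x)
    (hF : ∀ x, F x = (F1 x + F2 x) / 2)
    (x1 x2 x3 : ℝ)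
    (hx1 : x1 = x0 - γ * (x0 - c))
    (hx2 : x2 = x1 - γ * (x1 - c))
    (hx3 : x3 = x2 - 2 * γ * (x0 + c)) :
    (∀ x, F x = x ^ 2 / 2)
    ∧ x3 = x0 * (1 - 4 * γ + γ ^ 2) - γ ^ 2 * c
    ∧ (c > (1 + |x0 * (1 - 4 * γ + γ ^ 2)|) / γ ^ 2 →
        deriv F x3 = x3 ∧ 1 < |deriv F x3|) := by
  have hFq : ∀ x, F x = x ^ 2 / 2 := by
    intro x; rw [hF, hF1, hF2]; ring
  have hx3' : x3 = x0 * (1 - 4 * γ + γ ^ 2) - γ ^ 2 * c := by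
    subst hx1 hx2 hx3; ring
  refine ⟨hFq, hx3', fun hcg => ?_⟩
  have hFe : F = fun x => x ^ 2 / 2 := funext hFq
  have hd : deriv F x3 = x3 := by
    rw [hFe]
    have : deriv (fun x : ℝ => x ^ 2 / 2) x3 = x3 := by
      simp [deriv_div_const]
    exact this
  refine ⟨hd, ?_⟩
  rw [hd]
  have hγ2 : (0:ℝ) < γ ^ 2 := by positivity
  have h1 : 1 + |x0 * (1 - 4 * γ + γ ^ 2)| < γ ^ 2 * c := by
    have := (div_lt_iff₀ hγ2).mp hcg
    linarith
  have h2 : x3 < -1 := by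
    have := le_abs_self (x0 * (1 - 4 * γ + γ ^ 2))
    linarith [hx3']
  have : 1 < -x3 := by linarith
  calc 1 < -x3 := this
    _ ≤ |x3| := neg_le_abs x3
end

section
/- Effective computation-time inequality for Delay-Adaptive ASGD: For positive reals τ₁,…,τ_n, define τ_DA := n (Σ_i τ_i^{-3}) / (Σ_i τ_i^{-2})², τ_H := n / (Σ_i τ_i^{-1}), and τ_min := min_i τ_i. Then τ_H ≤ τ_DA ≤ n τ_min. -/
open Finset

/-- **Effective computation-time inequality for Delay-Adaptive ASGD.**
For positive reals `τ 1, …, τ n` (the workers' fixed gradient computation times), with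
`τDA = n (∑ i, τ i⁻³) / (∑ i, τ i⁻²)²` the effective time constant of Delay-Adaptive ASGD,
`τH = n / ∑ i, τ i⁻¹` the harmonic mean, and `τmin = min_i τ i`:
`τH ≤ τDA ≤ n τmin`. -/
theorem delay_adaptive_effective_time
    {n : ℕ} (hn : 0 < n)
    (τ : Fin n → ℝ) (hτpos : ∀ i, 0 < τ i)
    (τH : ℝ) (hτH : τH = (n : ℝ) / ∑ i, (τ i)⁻¹)
    (τDA : ℝ) (hτDA : τDA = (n : ℝ) * (∑ i, (τ i ^ 3)⁻¹) / (∑ i, (τ i ^ 2)⁻¹) ^ 2)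
    (τmin : ℝ) (hτmin : IsLeast (Set.range τ) τmin) :
    τH ≤ τDA ∧ τDA ≤ (n : ℝ) * τmin := by
  obtain ⟨⟨j, hj⟩, hlb⟩ := hτmin
  have hτminpos : 0 < τmin := hj ▸ hτpos j
  set a : Fin n → ℝ := fun i => (τ i)⁻¹ with ha
  have hapos : ∀ i, 0 < a i := fun i => inv_pos.2 (hτpos i)
  have hne : (Finset.univ : Finset (Fin n)).Nonempty := ⟨j, Finset.mem_univ j⟩
  have h2 : (∑ i, (τ i ^ 2)⁻¹) = ∑ i, a i ^ 2 := by
    simp [ha, inv_pow]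
  have h3 : (∑ i, (τ i ^ 3)⁻¹) = ∑ i, a i ^ 3 := by
    simp [ha, inv_pow]
  have hS1 : 0 < ∑ i, a i := Finset.sum_pos (fun i _ => hapos i) hne
  have hS2 : 0 < ∑ i, a i ^ 2 := Finset.sum_pos (fun i _ => pow_pos (hapos i) 2) hne
  have hS3 : 0 < ∑ i, a i ^ 3 := Finset.sum_pos (fun i _ => pow_pos (hapos i) 3) hne
  have hnpos : (0:ℝ) < n := Nat.cast_pos.2 hn
  -- Cauchy-Schwarz: (∑ a²)² ≤ (∑ a)(∑ a³)
  have hCS : (∑ i, a i ^ 2) ^ 2 ≤ (∑ i, a i) * (∑ i, a i ^ 3) := by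
    exact Finset.sum_sq_le_sum_mul_sum_of_sq_eq_mul Finset.univ
      (fun i _ => (hapos i).le) (fun i _ => (pow_pos (hapos i) 3).le)
      (fun i _ => by ring)
  -- bound a i ≤ a j
  have haj : a j = τmin⁻¹ := by rw [ha]; simp [hj]
  have hle : ∀ i, a i ≤ a j := by
    intro i
    rw [haj, ha]
    exact inv_anti₀ hτminpos (hlb ⟨i, rfl⟩)
  have hsum3 : (∑ i, a i ^ 3) ≤ a j * ∑ i, a i ^ 2 := by
    rw [Finset.mul_sum]
    refine Finset.sum_le_sum fun i _ => ?_
    have : a i ^ 3 = a i * a i ^ 2 := by ring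
    rw [this]
    exact mul_le_mul_of_nonneg_right (hle i) (by positivity)
  have hS2ge : a j ^ 2 ≤ ∑ i, a i ^ 2 :=
    Finset.single_le_sum (fun i _ => le_of_lt (pow_pos (hapos i) 2)) (Finset.mem_univ j)
  have hajτ : τmin * a j = 1 := by rw [haj]; field_simp
  constructor
  · rw [hτH, hτDA, h2, h3]
    rw [div_le_div_iff₀ hS1 (by positivity)]
    have := mul_le_mul_of_nonneg_left hCS (le_of_lt hnpos)
    nlinarith
  · rw [hτDA, h2, h3, div_le_iff₀ (by positivity)]
    have hajpos := hapos j
    have key : a j ≤ τmin * ∑ i, a i ^ 2 := by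
      nlinarith [mul_le_mul_of_nonneg_left hS2ge hτminpos.le]
    calc (n:ℝ) * ∑ i, a i ^ 3 ≤ (n:ℝ) * (a j * ∑ i, a i ^ 2) :=
          mul_le_mul_of_nonneg_left hsum3 hnpos.le
      _ ≤ (n:ℝ) * ((τmin * ∑ i, a i ^ 2) * ∑ i, a i ^ 2) :=
          mul_le_mul_of_nonneg_left (mul_le_mul_of_nonneg_right key hS2.le) hnpos.le
      _ = (n:ℝ) * τmin * (∑ i, a i ^ 2) ^ 2 := by ring
end
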